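/- arXiv:math/0409378 — 6 statements merged into one kernel-verified Lean document; each statement's English description precedes it below -/
import Mathlib

section
/- Let $C$ be a vector space over a field $k$ of characteristic zero with a linear map $D: C \to C$ and bilinear products $\oo{n}: C \times C \to C$ for $n \in \mathbb{Z}_{\geq 0}$ satisfying the conformal axioms. Then the left associativity identity $(u \oo{n} v) \oo{m} w = \sum_{s=0}^{n} (-1)^s \binom{n}{s} u \oo{n-s} (v \oo{m+s} w)$ holding for all $n, m \geq 0$ and all $u, v, w \in C$ is equivalent to the right associativity identity $u \oo{n} (v \oo{m} w) = \sum_{s \geq 0} \binom{n}{s} (u \oo{n-s} v) \oo{m+s} w$ holding for all $n, m \geq 0$ and all $u, v, w \in C$. -/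
/-!
Write `F n m = (u ₍ₙ₎ v) ₍ₘ₎ w` and `G n m = u ₍ₙ₎ (v ₍ₘ₎ w)`, and let `Φₐ` send a family `G` to
`(n, m) ↦ ∑ₛ aˢ (n choose s) G (n - s) (m + s)`. The left identity says `F = Φ₋₁ G`, the right one
says `G = Φ₁ F`. Regrouping the double sum by `r = s + t` and using
`(n choose s) (n - s choose r - s) = (n choose r) (r choose s)` together with the binomial theorem gives
`Φₐ ∘ Φ_b = Φ_{a+b}`, so `Φ₁` and `Φ₋₁` are inverse to each other.
-/

open Finset

section BinomialShift

variable {R M : Type*}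

def binomialShift [Semiring R] [AddCommMonoid M] [Module R M]
    (a : R) (G : ℕ → ℕ → M) (n m : ℕ) : M :=
  ∑ s ∈ range (n + 1), (a ^ s * (n.choose s : R)) • G (n - s) (m + s)

@[simp]
lemma binomialShift_zero [Semiring R] [AddCommMonoid M] [Module R M] (G : ℕ → ℕ → M) :
    binomialShift (0 : R) G = G := by
  ext n m
  rw [binomialShift, sum_range_succ']
  simp

section CommSemiring

variable [CommSemiring R] [AddCommMonoid M] [Module R M]

lemma binomialShift_binomialShift (a b : R) (G : ℕ → ℕ → M) :
    binomialShift a (binomialShift b G) = binomialShift (a + b) G := by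
  ext n m
  have hterm : ∀ r ∈ range (n + 1), ∀ s ∈ range (r + 1),
      (a ^ s * (n.choose s : R)) • (b ^ (r - s) * ((n - s).choose (r - s) : R)) •
          G (n - s - (r - s)) (m + s + (r - s)) =
        ((a ^ s * b ^ (r - s) * (r.choose s : R)) * (n.choose r : R)) • G (n - r) (m + r) := by
    intro r hr s hs
    rw [mem_range] at hr hs
    have hchoose : (n.choose s : R) * ((n - s).choose (r - s) : R)
        = (n.choose r : R) * (r.choose s : R) := by
      rw [← Nat.cast_mul, ← Nat.cast_mul, Nat.choose_mul (by omega)]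
    rw [smul_smul, show n - s - (r - s) = n - r by omega, show m + s + (r - s) = m + r by omega]
    congr 1
    calc a ^ s * (n.choose s : R) * (b ^ (r - s) * ((n - s).choose (r - s) : R))
        = a ^ s * b ^ (r - s) * ((n.choose s : R) * ((n - s).choose (r - s) : R)) := by ring
      _ = _ := by rw [hchoose]; ring
  calc binomialShift a (binomialShift b G) n m
      = ∑ s ∈ range (n + 1), ∑ t ∈ range (n + 1 - s),
          (a ^ s * (n.choose s : R)) • (b ^ t * ((n - s).choose t : R)) •
            G (n - s - t) (m + s + t) := by
        refine sum_congr rfl fun s hs => ?_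
        rw [binomialShift, smul_sum, show n - s + 1 = n + 1 - s by grind]
    _ = ∑ r ∈ range (n + 1), ∑ s ∈ range (r + 1),
          ((a ^ s * b ^ (r - s) * (r.choose s : R)) * (n.choose r : R)) • G (n - r) (m + r) := by
        rw [← sum_range_diag_flip]
        exact sum_congr rfl fun r hr => sum_congr rfl (hterm r hr)
    _ = binomialShift (a + b) G n m := by
        simp only [binomialShift, ← sum_smul, ← sum_mul, add_pow]

end CommSemiring

lemma eq_binomialShift_iff [CommRing R] [AddCommGroup M] [Module R M]
    {a : R} {F G : ℕ → ℕ → M} : F = binomialShift a G ↔ G = binomialShift (-a) F := by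
  constructor <;> rintro rfl <;> simp [binomialShift_binomialShift]

end BinomialShift

theorem conformal_assoc_left_iff_right_general
    {k : Type*} [Field k]
    {C : Type*} [AddCommGroup C] [Module k C]
    (mul : ℕ → C →ₗ[k] C →ₗ[k] C) :
    (∀ (n m : ℕ) (u v w : C),
        mul m (mul n u v) w =
          ∑ s ∈ range (n + 1),
            ((-1 : k) ^ s * (n.choose s : k)) • mul (n - s) u (mul (m + s) v w))
      ↔
    (∀ (n m : ℕ) (u v w : C),
        mul n u (mul m v w) =
          ∑ s ∈ range (n + 1),
            ((n.choose s : k)) • mul (m + s) (mul (n - s) u v) w) := by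
  have key (u v w : C) :
      (fun n m => mul m (mul n u v) w) = binomialShift (-1 : k) (fun n m => mul n u (mul m v w)) ↔
        (fun n m => mul n u (mul m v w)) = binomialShift (1 : k) (fun n m => mul m (mul n u v) w) := by
    rw [eq_binomialShift_iff, neg_neg]
  simp only [funext_iff, binomialShift, one_pow, one_mul] at key
  exact ⟨fun h n m u v w => (key u v w).1 (fun n m => h n m u v w) n m,
    fun h n m u v w => (key u v w).2 (fun n m => h n m u v w) n m⟩

theorem conformal_assoc_left_iff_right
    {k : Type*} [Field k] [CharZero k]
    {C : Type*} [AddCommGroup C] [Module k C]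
    (Dop : C →ₗ[k] C) (mul : ℕ → C →ₗ[k] C →ₗ[k] C)
    (hloc : ∀ x y : C, ∃ N : ℕ, ∀ n ≥ N, mul n x y = 0)
    (hC2 : ∀ (n : ℕ) (x y : C),
      mul n x (Dop y) = Dop (mul n x y) + (n : k) • mul (n - 1) x y)
    (hC3 : ∀ (n : ℕ) (x y : C),
      mul n (Dop x) y = -((n : k)) • mul (n - 1) x y) :
    (∀ (n m : ℕ) (u v w : C),
        mul m (mul n u v) w =
          ∑ s ∈ range (n + 1),
            ((-1 : k) ^ s * (n.choose s : k)) • mul (n - s) u (mul (m + s) v w))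
      ↔
    (∀ (n m : ℕ) (u v w : C),
        mul n u (mul m v w) =
          ∑ s ∈ range (n + 1),
            ((n.choose s : k)) • mul (m + s) (mul (n - s) u v) w) :=
  conformal_assoc_left_iff_right_general mul
end

section
/- Let $C$ be an associative conformal algebra over $k[D]$ (char $k = 0$) and let $I$ be a two-sided ideal of $C$ with $C \oo{n} I = 0$ for all $n \geq 0$. If the quotient $\bar{C} = C/I$ contains an idempotent $\bar{e}$ (i.e., $\bar{e} \oo{n} \bar{e} = \delta_{n,0} \bar{e}$ for all $n \geq 0$), then $C$ contains an idempotent $e$ whose image in $\bar{C}$ is $\bar{e}$. Explicitly, if $e_0$ is any preimage of $\bar{e}$, then $e = e_0 \oo{0} e_0$ is such an idempotent. -/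
open Finset

/-- Lifting of idempotents modulo an ideal annihilated by the whole algebra:
if `e₀` is an idempotent modulo `I` and `C ⟨n⟩ I = 0` for all `n`, then
`e = e₀ ⟨0⟩ e₀` is an honest idempotent which is again a preimage of `ē`. -/
theorem idempotent_lifting
    {k : Type*} [Field k] [CharZero k]
    {C : Type*} [AddCommGroup C] [Module k C]
    (Dop : C →ₗ[k] C) (mul : ℕ → C →ₗ[k] C →ₗ[k] C)
    (hloc : ∀ x y : C, ∃ N : ℕ, ∀ n ≥ N, mul n x y = 0)
    (hC2 : ∀ (n : ℕ) (x y : C),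
      mul n x (Dop y) = Dop (mul n x y) + (n : k) • mul (n - 1) x y)
    (hC3 : ∀ (n : ℕ) (x y : C),
      mul n (Dop x) y = -((n : k)) • mul (n - 1) x y)
    (hassoc : ∀ (n m : ℕ) (u v w : C),
      mul m (mul n u v) w =
        ∑ s ∈ range (n + 1),
          ((-1 : k) ^ s * (n.choose s : k)) • mul (n - s) u (mul (m + s) v w))
    (I : Submodule k C)
    (hDI : ∀ x ∈ I, Dop x ∈ I)
    (hIright : ∀ (n : ℕ) (c : C), ∀ x ∈ I, mul n x c ∈ I)
    (hann : ∀ (n : ℕ) (c : C), ∀ x ∈ I, mul n c x = 0)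
    (e₀ : C)
    (hidem : ∀ n : ℕ, mul n e₀ e₀ - (if n = 0 then e₀ else 0) ∈ I) :
    (mul 0 e₀ e₀ - e₀ ∈ I) ∧
      (∀ n : ℕ, mul n (mul 0 e₀ e₀) (mul 0 e₀ e₀) =
        if n = 0 then mul 0 e₀ e₀ else 0) := by
  have h0 : mul 0 e₀ e₀ - e₀ ∈ I := by simpa using hidem 0
  refine ⟨h0, fun n => ?_⟩
  have hstep : mul n e₀ (mul 0 e₀ e₀) = mul n e₀ e₀ := by
    have h1 : mul 0 e₀ e₀ = e₀ + (mul 0 e₀ e₀ - e₀) := by abel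
    rw [h1, map_add, hann n e₀ _ h0, add_zero]
  have key : mul n (mul 0 e₀ e₀) (mul 0 e₀ e₀) = mul 0 e₀ (mul n e₀ (mul 0 e₀ e₀)) := by
    simpa using hassoc 0 n e₀ e₀ (mul 0 e₀ e₀)
  have hj : mul n e₀ e₀ = (if n = 0 then e₀ else 0) + (mul n e₀ e₀ - (if n = 0 then e₀ else 0)) := by
    abel
  rw [key, hstep, hj, map_add, hann 0 e₀ _ (hidem n)]
  by_cases h : n = 0 <;> simp [h]
end

section
/- Let $U, V$ be modules over $H = k[D]$ ($k$ of characteristic zero) and let $a: H \to \mathrm{Hom}_k(U, V)$ be a left conformal homomorphism, i.e., a linear map with $a(D^n) = 0$ for $n$ sufficiently large on each element (continuity) and $D \circ a(h) - a(h) \circ D = -a(\partial_D h)$ for all $h \in H$. If $u \in U$ is a torsion element (i.e., $f(D) u = 0$ for some nonzero $f \in k[D]$), then $a(h)(u) = 0$ for all $h \in H$. -/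
private lemma conf_coeff_id (n m j : ℕ) :
    n.choose (j+1) * (m+1).descFactorial (j+1)
      = n.choose (j+1) * m.descFactorial (j+1)
        + n * ((n-1).choose j * m.descFactorial j) := by
  rcases Nat.lt_or_ge m j with h | h
  · have h1 : m.descFactorial j = 0 := Nat.descFactorial_eq_zero_iff_lt.2 h
    have h2 : m.descFactorial (j+1) = 0 :=
      Nat.descFactorial_eq_zero_iff_lt.2 (h.trans (Nat.lt_succ_self j))
    have h3 : (m+1).descFactorial (j+1) = 0 := by
      rw [Nat.succ_descFactorial_succ, h1, Nat.mul_zero]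
    rw [h1, h2, h3]; ring
  · rw [Nat.succ_descFactorial_succ, Nat.descFactorial_succ]
    cases n with
    | zero => simp
    | succ n =>
      have key : (n+1) * n.choose j = (n+1).choose (j+1) * (j+1) :=
        Nat.add_one_mul_choose_eq n j
      have hm : m + 1 = (m - j) + (j + 1) := by omega
      calc (n+1).choose (j+1) * ((m+1) * m.descFactorial j)
          = (n+1).choose (j+1) * ((m-j) * m.descFactorial j)
            + ((n+1).choose (j+1) * (j+1)) * m.descFactorial j := by rw [hm]; ring
        _ = (n+1).choose (j+1) * ((m-j) * m.descFactorial j)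
            + (n+1) * (n.choose j * m.descFactorial j) := by rw [← key]; ring

private lemma conf_mono_expand
    {k : Type*} [Field k]
    {U V : Type*} [AddCommGroup U] [Module k U] [AddCommGroup V] [Module k V]
    (Du : U →ₗ[k] U) (Dv : V →ₗ[k] V) (a : ℕ → U →ₗ[k] V)
    (hconf' : ∀ (n : ℕ) (w : U), a n (Du w) = Dv (a n w) + (n : k) • a (n-1) w) :
    ∀ (m n : ℕ) (u : U), a n ((Du ^ m) u)
      = ∑ j ∈ Finset.range (m+1),
          ((n.choose j * m.descFactorial j : ℕ) : k) • (Dv ^ (m - j)) (a (n - j) u) := by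
  intro m
  induction m with
  | zero => intro n u; simp
  | succ m ih =>
    intro n u
    have h1 : a n ((Du ^ (m+1)) u)
        = Dv (a n ((Du ^ m) u)) + (n : k) • a (n-1) ((Du ^ m) u) := by
      rw [pow_succ', Module.End.mul_apply]; exact hconf' n _
    rw [h1, ih n, ih (n-1)]
    have hB : Dv (∑ j ∈ Finset.range (m+1),
          ((n.choose j * m.descFactorial j : ℕ) : k) • (Dv ^ (m - j)) (a (n - j) u))
        = ∑ j ∈ Finset.range (m+1),
          ((n.choose j * m.descFactorial j : ℕ) : k) • (Dv ^ (m + 1 - j)) (a (n - j) u) := by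
      rw [map_sum]
      refine Finset.sum_congr rfl ?_
      intro j hj
      have hjm : j ≤ m := Nat.lt_succ_iff.mp (Finset.mem_range.mp hj)
      rw [map_smul]
      congr 1
      have : m + 1 - j = (m - j) + 1 := by omega
      rw [this, pow_succ', Module.End.mul_apply]
    rw [hB, Finset.smul_sum]
    symm
    -- name the summands
    set A : ℕ → V := fun j =>
      ((n.choose j * (m+1).descFactorial j : ℕ) : k) • (Dv ^ (m + 1 - j)) (a (n - j) u) with hA
    set B : ℕ → V := fun j =>
      ((n.choose j * m.descFactorial j : ℕ) : k) • (Dv ^ (m + 1 - j)) (a (n - j) u) with hBdef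
    set C : ℕ → V := fun j =>
      (n : k) • (((n-1).choose j * m.descFactorial j : ℕ) : k)
        • (Dv ^ (m - j)) (a (n - 1 - j) u) with hC
    have hAB0 : A 0 = B 0 := by simp [hA, hBdef]
    have hBtop : B (m+1) = 0 := by
      have : m.descFactorial (m+1) = 0 :=
        Nat.descFactorial_eq_zero_iff_lt.2 (Nat.lt_succ_self m)
      simp [hBdef, this]
    have hstep : ∀ j, A (j+1) = B (j+1) + C j := by
      intro j
      have hidx : n - (j+1) = n - 1 - j := by omega
      have hexp : m + 1 - (j+1) = m - j := by omega
      have hcast : ((n.choose (j+1) * (m+1).descFactorial (j+1) : ℕ) : k)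
          = ((n.choose (j+1) * m.descFactorial (j+1) : ℕ) : k)
            + (n : k) * (((n-1).choose j * m.descFactorial j : ℕ) : k) := by
        rw [← Nat.cast_mul, ← Nat.cast_add, ← conf_coeff_id]
      simp only [hA, hBdef, hC, hidx, hexp, hcast, add_smul, mul_smul]
    calc ∑ j ∈ Finset.range (m+1+1), A j
        = ∑ j ∈ Finset.range (m+1), A (j+1) + A 0 := Finset.sum_range_succ' A (m+1)
      _ = ∑ j ∈ Finset.range (m+1), (B (j+1) + C j) + B 0 := by
          rw [hAB0]; congr 1; exact Finset.sum_congr rfl fun j _ => hstep j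
      _ = (∑ j ∈ Finset.range (m+1), B (j+1) + B 0) + ∑ j ∈ Finset.range (m+1), C j := by
          rw [Finset.sum_add_distrib]; abel
      _ = ∑ j ∈ Finset.range (m+1+1), B j + ∑ j ∈ Finset.range (m+1), C j := by
          rw [Finset.sum_range_succ' B (m+1)]
      _ = ∑ j ∈ Finset.range (m+1), B j + ∑ j ∈ Finset.range (m+1), C j := by
          rw [Finset.sum_range_succ, hBtop, add_zero]

/-- A left conformal homomorphism (given by the operators `a(Dⁿ)`, `n ≥ 0`)
vanishes on every `k[D]`-torsion element of its domain. -/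
theorem conformal_hom_kills_torsion
    {k : Type*} [Field k] [CharZero k]
    {U V : Type*} [AddCommGroup U] [Module k U] [AddCommGroup V] [Module k V]
    (Du : U →ₗ[k] U) (Dv : V →ₗ[k] V)
    (a : ℕ → U →ₗ[k] V)
    (hcont : ∀ u : U, ∃ N : ℕ, ∀ n ≥ N, a n u = 0)
    (hconf : ∀ (n : ℕ) (u : U),
      Dv (a n u) - a n (Du u) = -((n : k)) • a (n - 1) u)
    (u : U) (f : Polynomial k) (hf : f ≠ 0)
    (hu : Polynomial.aeval (Du : Module.End k U) f u = 0) :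
    ∀ n : ℕ, a n u = 0 := by
  have hconf' : ∀ (n : ℕ) (w : U), a n (Du w) = Dv (a n w) + (n : k) • a (n-1) w := by
    intro n w
    have h := sub_eq_iff_eq_add.mp (hconf n w)
    rw [h]
    simp [neg_smul]
  obtain ⟨N0, hN0⟩ := hcont u
  have key : ∀ n : ℕ, (∀ m, n < m → a m u = 0) → a n u = 0 := by
    intro n hm
    by_cases hd : f.natDegree = 0
    · obtain ⟨c, rfl⟩ := Polynomial.natDegree_eq_zero.mp hd
      have hc : c ≠ 0 := by
        intro h; exact hf (by rw [h, map_zero])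
      have hu' : c • u = 0 := by
        simpa [Polynomial.aeval_C, Algebra.algebraMap_eq_smul_one] using hu
      have : u = 0 := by
        have := smul_eq_zero.mp hu'
        tauto
      rw [this, map_zero]
    · set d := f.natDegree with hddef
      have hd1 : 1 ≤ d := Nat.one_le_iff_ne_zero.2 hd
      have h0 : a (n + d) ((Polynomial.aeval (Du : Module.End k U) f) u) = 0 := by
        rw [hu, map_zero]
      rw [Polynomial.aeval_eq_sum_range] at h0
      simp only [LinearMap.sum_apply, LinearMap.smul_apply, map_sum, map_smul] at h0
      have hmono := conf_mono_expand Du Dv a hconf'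
      have h1 : ∑ i ∈ Finset.range (d+1), f.coeff i •
          ∑ j ∈ Finset.range (i+1),
            (((n+d).choose j * i.descFactorial j : ℕ) : k)
              • (Dv ^ (i - j)) (a (n + d - j) u) = 0 := by
        rw [← h0]
        refine Finset.sum_congr rfl ?_
        intro i _
        rw [hmono i (n+d) u]
      have h2 : ∑ i ∈ Finset.range (d+1), f.coeff i •
          ∑ j ∈ Finset.range (i+1),
            (((n+d).choose j * i.descFactorial j : ℕ) : k)
              • (Dv ^ (i - j)) (a (n + d - j) u)
          = f.coeff d • (((n+d).choose d * d.descFactorial d : ℕ) : k) • a n u := by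
        rw [Finset.sum_eq_single d]
        · congr 1
          rw [Finset.sum_eq_single d]
          · simp
          · intro j hj hjd
            have hjlt : j < d := by
              have := Finset.mem_range.mp hj; omega
            have : a (n + d - j) u = 0 := hm _ (by omega)
            rw [this, map_zero, smul_zero]
          · intro h; exact absurd (Finset.self_mem_range_succ d) h
        · intro i hi hid
          have hilt : i < d := by
            have := Finset.mem_range.mp hi; omega
          have : ∑ j ∈ Finset.range (i+1),
              (((n+d).choose j * i.descFactorial j : ℕ) : k)
                • (Dv ^ (i - j)) (a (n + d - j) u) = 0 := by
            refine Finset.sum_eq_zero ?_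
            intro j hj
            have : a (n + d - j) u = 0 := by
              refine hm _ ?_
              have := Finset.mem_range.mp hj; omega
            rw [this, map_zero, smul_zero]
          rw [this, smul_zero]
        · intro h; exact absurd (Finset.self_mem_range_succ d) h
      rw [h2] at h1
      have hcoeff : f.coeff d ≠ 0 := by
        rw [hddef]
        exact Polynomial.leadingCoeff_ne_zero.mpr hf
      have hcast : (((n+d).choose d * d.descFactorial d : ℕ) : k) ≠ 0 := by
        rw [Nat.cast_ne_zero]
        have h1' : 0 < (n+d).choose d := Nat.choose_pos (by omega)
        have h2' : 0 < d.descFactorial d := by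
          rw [Nat.descFactorial_self]; exact Nat.factorial_pos d
        positivity
      rcases smul_eq_zero.mp h1 with h | h
      · exact absurd h hcoeff
      · rcases smul_eq_zero.mp h with h' | h'
        · exact absurd h' hcast
        · exact h'
  have main : ∀ t n : ℕ, N0 ≤ n + t → a n u = 0 := by
    intro t
    induction t with
    | zero => intro n h; exact hN0 n (by omega)
    | succ t ih =>
      intro n h
      by_cases hn : N0 ≤ n
      · exact hN0 n hn
      · exact key n (fun m hmn => ih m (by omega))
  intro n
  exact main N0 n (by omega)
end

section
/- Let $C$ be an associative conformal algebra over $k[D]$, char $k = 0$. Define $\{x \oo{n} y\} = \sum_{s \geq 0} (-1)^{n+s} \frac{D^s}{s!} (x \oo{n+s} y)$ (a finite sum by locality). Then for all $u, v, w \in C$ and $n, m \geq 0$: $u \oo{n} \{v \oo{m} w\} = \{(u \oo{n} v) \oo{m} w\}$. -/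
open Finset

/-! Expand the left side with the divided-power Leibniz rule
`u ⟨n⟩ D⁽ˢ⁾ y = ∑_{r+j=s} C(n,j) D⁽ʳ⁾ (u ⟨n-j⟩ y)`, a consequence of (C2), and the right side with
the associativity `(u ⟨n⟩ v) ⟨m+r⟩ w = ∑_j (-1)ʲ C(n,j) u ⟨n-j⟩ (v ⟨m+r+j⟩ w)`. Both sides become the
same double sum `∑_{r,j} (-1)^{m+r+j} C(n,j) D⁽ʳ⁾ (u ⟨n-j⟩ (v ⟨m+r+j⟩ w))`, grouped by antidiagonals
`r + j = s` on the left and by the product of the ranges of `r` and `j` on the right; locality of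
`v, w` makes it finite. -/

/-- The curly products `{x ⟨n⟩ y} = ∑ₛ (-1)^{n+s} (Dˢ/s!) (x ⟨n+s⟩ y)`
(a finite sum whenever the products are local, expressed via `finsum`). -/
noncomputable def curlyFn {k : Type*} [Field k]
    {C : Type*} [AddCommGroup C] [Module k C]
    (Dop : C →ₗ[k] C) (mul : ℕ → C →ₗ[k] C →ₗ[k] C)
    (n : ℕ) (x y : C) : C :=
  ∑ᶠ s : ℕ, ((-1 : k) ^ (n + s) * ((s.factorial : k))⁻¹) • ((Dop ^ s) (mul (n + s) x y))

theorem Finset.Nat.sum_range_sum_antidiagonal_eq_sum_product {M : Type*} [AddCommMonoid M]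
    {N A B : ℕ} (g : ℕ × ℕ → M)
    (hg : ∀ p, g p ≠ 0 → p.1 + p.2 < N ∧ p.1 < A ∧ p.2 < B) :
    ∑ t ∈ range N, ∑ p ∈ antidiagonal t, g p = ∑ p ∈ range A ×ˢ range B, g p := by
  rw [sum_sigma']
  refine sum_bij_ne_zero (fun x _ _ => x.2) ?_ ?_ ?_ fun _ _ _ => rfl
  · intro x _ hx
    obtain ⟨-, hA, hB⟩ := hg _ hx
    simp [hA, hB]
  · rintro ⟨t, p⟩ ht _ ⟨t', p'⟩ ht' _ (rfl : p = p')
    simp only [mem_sigma, HasAntidiagonal.mem_antidiagonal] at ht ht'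
    rw [← ht.2, ← ht'.2]
  · intro p _ hp
    exact ⟨⟨p.1 + p.2, p⟩, by simpa using (hg p hp).1, hp, rfl⟩

section DividedPower

variable {k : Type*} [Field k] {C : Type*} [AddCommGroup C] [Module k C] (Dop : C →ₗ[k] C)

noncomputable def dividedPow (s : ℕ) : C →ₗ[k] C := ((s.factorial : k)⁻¹) • Dop ^ s

theorem apply_dividedPow [CharZero k] (r : ℕ) (z : C) :
    Dop (dividedPow Dop r z) = ((r + 1 : ℕ) : k) • dividedPow Dop (r + 1) z := by
  have hr : ((r + 1 : ℕ) : k) ≠ 0 := Nat.cast_ne_zero.2 r.succ_ne_zero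
  simp only [dividedPow, LinearMap.smul_apply, map_smul, smul_smul, pow_succ',
    Module.End.mul_apply, Nat.factorial_succ, Nat.cast_mul, mul_inv, ← mul_assoc,
    mul_inv_cancel₀ hr, one_mul]

theorem mul_dividedPow [CharZero k] (mul : ℕ → C →ₗ[k] C →ₗ[k] C)
    (hC2 : ∀ (n : ℕ) (x y : C),
      mul n x (Dop y) = Dop (mul n x y) + (n : k) • mul (n - 1) x y)
    (N s : ℕ) (x y : C) :
    mul N x (dividedPow Dop s y) =
      ∑ p ∈ antidiagonal s, (N.choose p.2 : k) • dividedPow Dop p.1 (mul (N - p.2) x y) := by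
  induction s generalizing N with
  | zero => simp [dividedPow]
  | succ s ih =>
    set F : ℕ × ℕ → C := fun p => dividedPow Dop p.1 (mul (N - p.2) x y) with hF
    have hs : ((s + 1 : ℕ) : k) ≠ 0 := Nat.cast_ne_zero.2 s.succ_ne_zero
    refine smul_right_injective C hs ?_
    have hchoose : ∀ j,
        (N : k) * ((N - 1).choose j : k) = ((j + 1 : ℕ) : k) * (N.choose (j + 1) : k) := by
      intro j
      rcases N with _ | N
      · simp
      · exact_mod_cast (Nat.add_one_mul_choose_eq N j).trans (mul_comm _ _)
    calc ((s + 1 : ℕ) : k) • mul N x (dividedPow Dop (s + 1) y)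
        = mul N x (Dop (dividedPow Dop s y)) := by rw [apply_dividedPow, map_smul]
      _ = ∑ p ∈ antidiagonal s, (((p.1 + 1 : ℕ) : k) * N.choose p.2) • F (p.1 + 1, p.2) +
          ∑ p ∈ antidiagonal s, (((p.2 + 1 : ℕ) : k) * N.choose (p.2 + 1)) • F (p.1, p.2 + 1) := by
        rw [hC2, ih, ih, map_sum, smul_sum]
        congr 1 <;> refine sum_congr rfl fun p _ => ?_
        · rw [map_smul, apply_dividedPow, smul_smul, mul_comm]
        · rw [smul_smul, hchoose, hF, Nat.sub_sub, add_comm 1 p.2]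
      _ = ∑ p ∈ antidiagonal (s + 1), ((p.1 : k) * N.choose p.2) • F p +
          ∑ p ∈ antidiagonal (s + 1), ((p.2 : k) * N.choose p.2) • F p := by
        rw [Nat.sum_antidiagonal_succ, Nat.sum_antidiagonal_succ']
        simp
      _ = ((s + 1 : ℕ) : k) • ∑ p ∈ antidiagonal (s + 1), (N.choose p.2 : k) • F p := by
        rw [← sum_add_distrib, smul_sum]
        refine sum_congr rfl fun p hp => ?_
        rw [← add_smul, smul_smul, ← mem_antidiagonal.1 hp]
        push_cast
        ring_nf

end DividedPower

theorem curlyFn_eq_sum {k : Type*} [Field k] {C : Type*} [AddCommGroup C] [Module k C]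
    (Dop : C →ₗ[k] C) (mul : ℕ → C →ₗ[k] C →ₗ[k] C) {m N : ℕ} {x y : C}
    (h : ∀ s, N ≤ s → mul (m + s) x y = 0) :
    curlyFn Dop mul m x y =
      ∑ s ∈ range N, (-1 : k) ^ (m + s) • dividedPow Dop s (mul (m + s) x y) := by
  rw [curlyFn, finsum_eq_sum_of_support_subset _ fun s hs => ?_]
  · refine sum_congr rfl fun s _ => ?_
    rw [dividedPow, LinearMap.smul_apply, smul_smul]
  · by_contra hsN
    exact hs (by simp [h s (by simpa using hsN)])

theorem curly_identity_one_general
    {k : Type*} [Field k] [CharZero k]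
    {C : Type*} [AddCommGroup C] [Module k C]
    (Dop : C →ₗ[k] C) (mul : ℕ → C →ₗ[k] C →ₗ[k] C)
    (hloc : ∀ x y : C, ∃ N : ℕ, ∀ n ≥ N, mul n x y = 0)
    (hC2 : ∀ (n : ℕ) (x y : C),
      mul n x (Dop y) = Dop (mul n x y) + (n : k) • mul (n - 1) x y)
    (hassocL : ∀ (n m : ℕ) (u v w : C),
      mul m (mul n u v) w =
        ∑ s ∈ range (n + 1),
          ((-1 : k) ^ s * (n.choose s : k)) • mul (n - s) u (mul (m + s) v w)) :
    ∀ (n m : ℕ) (u v w : C),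
      mul n u (curlyFn Dop mul m v w) = curlyFn Dop mul m (mul n u v) w := by
  intro n m u v w
  obtain ⟨N, hN⟩ := hloc v w
  have hvw : ∀ s, N ≤ s → mul (m + s) v w = 0 := fun s hs => hN _ (by omega)
  set f : ℕ × ℕ → C := fun p => ((-1 : k) ^ (m + p.1 + p.2) * n.choose p.2) •
    dividedPow Dop p.1 (mul (n - p.2) u (mul (m + p.1 + p.2) v w)) with hf
  have hf_support : ∀ p, f p ≠ 0 → p.1 + p.2 < N ∧ p.1 < N ∧ p.2 < n + 1 := by
    intro p hp
    have hsum : p.1 + p.2 < N := by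
      by_contra! hle
      exact hp (by simp [hf, add_assoc, hvw _ hle])
    have hj : p.2 < n + 1 := by
      by_contra! hle
      exact hp (by simp [hf, Nat.choose_eq_zero_of_lt (show n < p.2 by omega)])
    omega
  have hlhs :
      mul n u (curlyFn Dop mul m v w) = ∑ t ∈ range N, ∑ p ∈ antidiagonal t, f p := by
    rw [curlyFn_eq_sum Dop mul hvw, map_sum]
    refine sum_congr rfl fun t _ => ?_
    rw [map_smul, mul_dividedPow Dop mul hC2, smul_sum]
    refine sum_congr rfl fun p hp => ?_
    rw [smul_smul, ← mem_antidiagonal.1 hp]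
    simp only [hf, add_assoc]
  have hrhs :
      curlyFn Dop mul m (mul n u v) w = ∑ r ∈ range N, ∑ j ∈ range (n + 1), f (r, j) := by
    rw [curlyFn_eq_sum Dop mul (N := N) fun r hr => ?_]
    · refine sum_congr rfl fun r _ => ?_
      rw [hassocL, map_sum, smul_sum]
      refine sum_congr rfl fun j _ => ?_
      rw [map_smul, smul_smul, ← mul_assoc, ← pow_add]
    · rw [hassocL]
      exact sum_eq_zero fun j _ => by rw [add_assoc, hvw _ (by omega), map_zero, smul_zero]
  rw [hlhs, hrhs, Nat.sum_range_sum_antidiagonal_eq_sum_product f hf_support, sum_product]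

theorem curly_identity_one
    {k : Type*} [Field k] [CharZero k]
    {C : Type*} [AddCommGroup C] [Module k C]
    (Dop : C →ₗ[k] C) (mul : ℕ → C →ₗ[k] C →ₗ[k] C)
    (hloc : ∀ x y : C, ∃ N : ℕ, ∀ n ≥ N, mul n x y = 0)
    (hC2 : ∀ (n : ℕ) (x y : C),
      mul n x (Dop y) = Dop (mul n x y) + (n : k) • mul (n - 1) x y)
    (hC3 : ∀ (n : ℕ) (x y : C),
      mul n (Dop x) y = -((n : k)) • mul (n - 1) x y)
    (hassocL : ∀ (n m : ℕ) (u v w : C),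
      mul m (mul n u v) w =
        ∑ s ∈ range (n + 1),
          ((-1 : k) ^ s * (n.choose s : k)) • mul (n - s) u (mul (m + s) v w))
    (hassocR : ∀ (n m : ℕ) (u v w : C),
      mul n u (mul m v w) =
        ∑ s ∈ range (n + 1), ((n.choose s : k)) • mul (m + s) (mul (n - s) u v) w) :
    ∀ (n m : ℕ) (u v w : C),
      mul n u (curlyFn Dop mul m v w) = curlyFn Dop mul m (mul n u v) w :=
  curly_identity_one_general Dop mul hloc hC2 hassocL
end

section
/- Let $C$ be a finitely generated associative conformal algebra over $H = k[D]$ (char $k = 0$) such that $\dim_k C/DC < \infty$. Then $C$ is a finitely generated $H$-module. -/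
/-!
Let `W` be the smallest subspace containing `B` and stable under all right multiplications
`· ∘ₙ b` with `b ∈ B`. Sesquilinearity and right associativity make `k[D] W` a conformal
subalgebra, so `k[D] W = C`. As `C/DC` is finite-dimensional, `W ⊆ span T + DC` for a finite
`T ⊆ C`, hence `C = k[D] T + Dⁿ⁺¹ C` for every `n`. Since `(Dⁿ⁺¹ c) ∘ₙ b = 0`, every product
`u ∘ₙ b` lies in the span of the products `t ∘ₘ b` (`t ∈ T`, `b ∈ B`), a finite set by locality.
Together with `B` this finite set spans a subspace containing `W`, so it generates `C` over `k[D]`.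
-/

open Finset

namespace Submodule

lemma exists_finset_le_span_sup {R M : Type*} [Ring R] [AddCommGroup M] [Module R M]
    (N W : Submodule R M) [IsNoetherian R (M ⧸ N)] : ∃ T : Finset M, W ≤ span R T ⊔ N := by
  classical
  obtain ⟨S, hS⟩ := IsNoetherian.noetherian (W.map N.mkQ)
  have hSW : ↑S ⊆ N.mkQ '' W := by rw [← map_coe, ← hS]; exact subset_span
  obtain ⟨T, -, rfl⟩ := Finset.subset_set_image_iff.mp hSW
  have : W.map N.mkQ = (span R T).map N.mkQ := by rw [map_span, ← Finset.coe_image, hS]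
  refine ⟨T, ?_⟩
  rw [sup_comm, ← comap_map_mkQ, ← this]
  exact le_comap_map _ _

end Submodule

namespace ConformalAlgebra

open Submodule Module.End

variable {k C : Type*} [Field k] [AddCommGroup C] [Module k C]

/-- The `k[D]`-submodule `k[D] V` generated by `V`. -/
def dSpan (D : Module.End k C) (V : Submodule k C) : Submodule k C :=
  ⨆ s : ℕ, V.map (D ^ s)

section dSpan

variable {D : Module.End k C} {V Z : Submodule k C}

lemma pow_apply_mem_dSpan {v : C} (hv : v ∈ V) (s : ℕ) : (D ^ s) v ∈ dSpan D V :=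
  mem_iSup_of_mem s (mem_map_of_mem hv)

lemma le_dSpan : V ≤ dSpan D V := fun v hv => by
  simpa using pow_apply_mem_dSpan (D := D) hv 0

lemma dSpan_mem_invtSubmodule : dSpan D V ∈ D.invtSubmodule := by
  refine (mem_invtSubmodule _).mpr (iSup_le fun s => ?_)
  rintro _ ⟨v, hv, rfl⟩
  simpa [pow_succ'] using pow_apply_mem_dSpan (D := D) hv (s + 1)

lemma pow_mem_invtSubmodule (hZ : Z ∈ D.invtSubmodule) (s : ℕ) :
    Z ∈ (D ^ s).invtSubmodule := by
  induction s with
  | zero => simp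
  | succ s ih => rw [pow_succ, mul_eq_comp]; exact invtSubmodule.comp _ ih hZ

lemma dSpan_le (hZ : Z ∈ D.invtSubmodule) (hVZ : V ≤ Z) : dSpan D V ≤ Z :=
  iSup_le fun s =>
    (map_mono hVZ).trans ((mem_invtSubmodule_iff_map_le _).mp (pow_mem_invtSubmodule hZ s))

lemma dSpan_mono (h : V ≤ Z) : dSpan D V ≤ dSpan D Z :=
  dSpan_le dSpan_mem_invtSubmodule (h.trans le_dSpan)

lemma dSpan_span_le (s : Set C) :
    dSpan D (span k s) ≤ span k {y | ∃ g ∈ s, ∃ n : ℕ, (D ^ n) g = y} := by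
  refine dSpan_le ?_ (span_mono fun g hg => ⟨g, hg, 0, by simp⟩)
  refine (mem_invtSubmodule _).mpr (span_le.mpr ?_)
  rintro _ ⟨g, hg, n, rfl⟩
  exact subset_span ⟨g, hg, n + 1, by simp [pow_succ']⟩

lemma dSpan_le_sup_range (h : V ≤ Z ⊔ LinearMap.range D) :
    dSpan D V ≤ dSpan D Z ⊔ LinearMap.range D := by
  refine dSpan_le (fun x _ => mem_sup_right (LinearMap.mem_range_self D x)) ?_
  exact h.trans (sup_le_sup_right le_dSpan _)

lemma sup_range_pow_eq_top (hZ : Z ∈ D.invtSubmodule) (h : Z ⊔ LinearMap.range D = ⊤)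
    (m : ℕ) : Z ⊔ LinearMap.range (D ^ m) = ⊤ := by
  induction m with
  | zero => rw [pow_zero, one_eq_id, LinearMap.range_id, sup_top_eq]
  | succ m ih =>
    have : LinearMap.range (D ^ m) ≤ Z ⊔ LinearMap.range (D ^ (m + 1)) := by
      rw [LinearMap.range_eq_map, ← h, Submodule.map_sup, pow_succ, mul_eq_comp,
        LinearMap.range_comp]
      exact sup_le_sup_right ((mem_invtSubmodule_iff_map_le _).mp (pow_mem_invtSubmodule hZ m)) _
    rw [eq_top_iff, ← ih]
    exact sup_le le_sup_left this

end dSpan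

def rightMulClosure (mul : ℕ → C →ₗ[k] C →ₗ[k] C) (B : Set C) : Submodule k C :=
  sInf {V | B ⊆ V ∧ ∀ n, ∀ v ∈ V, ∀ b ∈ B, mul n v b ∈ V}

section rightMulClosure

variable {mul : ℕ → C →ₗ[k] C →ₗ[k] C} {B : Set C}

lemma subset_rightMulClosure : B ⊆ rightMulClosure mul B :=
  fun _ hb => mem_sInf.mpr fun _ hV => hV.1 hb

lemma mul_mem_rightMulClosure {v b : C} (hv : v ∈ rightMulClosure mul B) (hb : b ∈ B)
    (n : ℕ) : mul n v b ∈ rightMulClosure mul B :=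
  mem_sInf.mpr fun _ hV => hV.2 n v (mem_sInf.mp hv _ hV) b hb

lemma rightMulClosure_le {V : Submodule k C} (hB : B ⊆ V)
    (hV : ∀ n, ∀ v ∈ V, ∀ b ∈ B, mul n v b ∈ V) : rightMulClosure mul B ≤ V :=
  sInf_le ⟨hB, hV⟩

end rightMulClosure

def IsLeftSesquilinear (D : Module.End k C) (mul : ℕ → C →ₗ[k] C →ₗ[k] C) : Prop :=
  ∀ (n : ℕ) (x y : C), mul n (D x) y = -(n : k) • mul (n - 1) x y

def IsRightSesquilinear (D : Module.End k C) (mul : ℕ → C →ₗ[k] C →ₗ[k] C) : Prop :=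
  ∀ (n : ℕ) (x y : C), mul n x (D y) = D (mul n x y) + (n : k) • mul (n - 1) x y

section Products

variable {D : Module.End k C} {mul : ℕ → C →ₗ[k] C →ₗ[k] C}

/-- For `s > n` the truncated `n - s` is harmless, as then `n.descFactorial s = 0`. -/
lemma mul_pow_apply_left (hC3 : IsLeftSesquilinear D mul) (s n : ℕ) (u : C) :
    mul n ((D ^ s) u) = ((-1) ^ s * n.descFactorial s : k) • mul (n - s) u := by
  induction s generalizing u with
  | zero => simp
  | succ s ih =>
    ext y
    rw [pow_succ, mul_apply, ih, LinearMap.smul_apply, LinearMap.smul_apply, hC3, smul_smul,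
      Nat.descFactorial_succ, Nat.sub_sub]
    push_cast
    ring_nf

lemma mul_pow_succ_apply_left (hC3 : IsLeftSesquilinear D mul) (n : ℕ) (u : C) :
    mul n ((D ^ (n + 1)) u) = 0 := by
  rw [mul_pow_apply_left hC3, Nat.descFactorial_eq_zero_iff_lt.mpr n.lt_succ_self]
  simp

lemma mul_mem_of_mem_dSpan_left (hC3 : IsLeftSesquilinear D mul)
    {V Z : Submodule k C} {y : C} (h : ∀ m, ∀ v ∈ V, mul m v y ∈ Z)
    {x : C} (hx : x ∈ dSpan D V) (n : ℕ) : mul n x y ∈ Z := by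
  suffices dSpan D V ≤ ⨅ m, Z.comap ((mul m).flip y) by
    exact mem_iInf _ |>.mp (this hx) n
  refine dSpan_le (fun x hx => ?_) (fun v hv => mem_iInf _ |>.mpr fun m => h m v hv)
  simp only [mem_iInf, mem_comap, LinearMap.flip_apply] at hx ⊢
  intro m
  rw [hC3]
  exact Z.smul_mem _ (hx (m - 1))

lemma mul_mem_of_mem_dSpan_right (hC2 : IsRightSesquilinear D mul)
    {V Z : Submodule k C} (hZ : Z ∈ D.invtSubmodule) {x : C} (h : ∀ m, ∀ v ∈ V, mul m x v ∈ Z)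
    {y : C} (hy : y ∈ dSpan D V) (n : ℕ) : mul n x y ∈ Z := by
  suffices dSpan D V ≤ ⨅ m, Z.comap (mul m x) by
    exact mem_iInf _ |>.mp (this hy) n
  refine dSpan_le (fun y hy => ?_) (fun v hv => mem_iInf _ |>.mpr fun m => h m v hv)
  simp only [mem_iInf, mem_comap] at hy ⊢
  intro m
  rw [hC2]
  exact Z.add_mem (hZ (hy m)) (Z.smul_mem _ (hy (m - 1)))

lemma mul_mem_dSpan_rightMulClosure
    (hC2 : IsRightSesquilinear D mul) (hC3 : IsLeftSesquilinear D mul)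
    (hassocR : ∀ (n m : ℕ) (u v w : C),
      mul n u (mul m v w) =
        ∑ s ∈ range (n + 1), (n.choose s : k) • mul (m + s) (mul (n - s) u v) w)
    {B : Set C} {x y : C} (hx : x ∈ dSpan D (rightMulClosure mul B))
    (hy : y ∈ dSpan D (rightMulClosure mul B)) (n : ℕ) :
    mul n x y ∈ dSpan D (rightMulClosure mul B) := by
  set S := dSpan D (rightMulClosure mul B)
  have mul_gen_mem : ∀ x ∈ S, ∀ m, ∀ b ∈ B, mul m x b ∈ S := fun x hx m b hb =>
    mul_mem_of_mem_dSpan_left hC3 (fun m _ hv => le_dSpan (mul_mem_rightMulClosure hv hb m)) hx m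
  have mul_closure_mem : rightMulClosure mul B ≤ ⨅ x ∈ S, ⨅ m, S.comap (mul m x) := by
    refine rightMulClosure_le (fun b hb => ?_) (fun m w hw b hb => ?_)
    · simp only [SetLike.mem_coe, mem_iInf, mem_comap]
      exact fun x hx m => mul_gen_mem x hx m b hb
    · simp only [mem_iInf, mem_comap] at hw ⊢
      intro x hx n
      rw [hassocR]
      exact S.sum_mem fun s _ => S.smul_mem _ (mul_gen_mem _ (hw x hx (n - s)) _ b hb)
  refine mul_mem_of_mem_dSpan_right hC2 dSpan_mem_invtSubmodule (fun m w hw => ?_) hy n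
  have hw' := mul_closure_mem hw
  simp only [mem_iInf, mem_comap] at hw'
  exact hw' x hx m

lemma mul_mem_of_sup_range_pow_eq_top (hC3 : IsLeftSesquilinear D mul)
    {V Z : Submodule k C} {b : C} {n : ℕ} (hV : dSpan D V ⊔ LinearMap.range (D ^ (n + 1)) = ⊤)
    (h : ∀ m, ∀ v ∈ V, mul m v b ∈ Z) (u : C) : mul n u b ∈ Z := by
  obtain ⟨f, hf, _, ⟨c, rfl⟩, rfl⟩ := mem_sup.mp (hV ▸ mem_top : u ∈ _)
  rw [map_add, LinearMap.add_apply, mul_pow_succ_apply_left hC3, LinearMap.zero_apply, add_zero]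
  exact mul_mem_of_mem_dSpan_left hC3 h hf n

lemma finite_range_mul (hloc : ∀ x y : C, ∃ N : ℕ, ∀ n ≥ N, mul n x y = 0) (x y : C) :
    (Set.range fun n => mul n x y).Finite := by
  obtain ⟨N, hN⟩ := hloc x y
  refine ((Set.finite_Iic N).image fun n => mul n x y).subset ?_
  rintro _ ⟨n, rfl⟩
  rcases le_total n N with h | h
  · exact ⟨n, h, rfl⟩
  · exact ⟨N, le_refl N, by simp only [hN n h, hN N le_rfl]⟩

end Products

end ConformalAlgebra

open ConformalAlgebra

theorem fg_conformal_finite_general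
    {k : Type*} [Field k]
    {C : Type*} [AddCommGroup C] [Module k C]
    (Dop : C →ₗ[k] C) (mul : ℕ → C →ₗ[k] C →ₗ[k] C)
    (hloc : ∀ x y : C, ∃ N : ℕ, ∀ n ≥ N, mul n x y = 0)
    (hC2 : ∀ (n : ℕ) (x y : C),
      mul n x (Dop y) = Dop (mul n x y) + (n : k) • mul (n - 1) x y)
    (hC3 : ∀ (n : ℕ) (x y : C),
      mul n (Dop x) y = -((n : k)) • mul (n - 1) x y)
    (hassocR : ∀ (n m : ℕ) (u v w : C),
      mul n u (mul m v w) =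
        ∑ s ∈ range (n + 1), ((n.choose s : k)) • mul (m + s) (mul (n - s) u v) w)
    -- `C` is finitely generated as a conformal algebra:
    (B : Finset C)
    (hgen : ∀ S : Submodule k C, (↑B : Set C) ⊆ S →
      (∀ x ∈ S, Dop x ∈ S) →
      (∀ (n : ℕ), ∀ x ∈ S, ∀ y ∈ S, mul n x y ∈ S) → S = ⊤)
    -- `dim_k C/DC < ∞`:
    (hquot : FiniteDimensional k (C ⧸ LinearMap.range Dop)) :
    ∃ G : Finset C,
      Submodule.span k {y : C | ∃ g ∈ G, ∃ s : ℕ, (Dop ^ s) g = y} = ⊤ := by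
  set W := rightMulClosure mul (B : Set C)
  have hW : dSpan Dop W = ⊤ := hgen _ (subset_rightMulClosure.trans le_dSpan)
    (fun _ hx => dSpan_mem_invtSubmodule hx)
    (fun n _ hx _ hy => mul_mem_dSpan_rightMulClosure hC2 hC3 hassocR hx hy n)
  obtain ⟨T, hT⟩ := Submodule.exists_finset_le_span_sup (LinearMap.range Dop) W
  have hTD : ∀ n, dSpan Dop (Submodule.span k T) ⊔ LinearMap.range (Dop ^ n) = ⊤ :=
    sup_range_pow_eq_top dSpan_mem_invtSubmodule <| top_le_iff.mp <| hW ▸ dSpan_le_sup_range hT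
  set G : Set C := ↑B ∪ ⋃ t ∈ T, ⋃ b ∈ B, Set.range fun m => mul m t b
  have hG : G.Finite := B.finite_toSet.union <|
    T.finite_toSet.biUnion fun t _ => B.finite_toSet.biUnion fun b _ => finite_range_mul hloc t b
  have hTG : ∀ m, ∀ b ∈ B, ∀ v ∈ Submodule.span k T, mul m v b ∈ Submodule.span k G :=
    fun m b hb => Submodule.span_le (p := (Submodule.span k G).comap ((mul m).flip b)) |>.mpr
      fun t ht => Submodule.subset_span <|
        Set.mem_union_right _ (Set.mem_biUnion ht (Set.mem_biUnion hb ⟨m, rfl⟩))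
  have hWG : W ≤ Submodule.span k G :=
    rightMulClosure_le (Submodule.subset_span.trans' Set.subset_union_left) fun n v _ b hb =>
      mul_mem_of_sup_range_pow_eq_top hC3 (hTD (n + 1)) (fun m => hTG m b hb) v
  refine ⟨hG.toFinset, top_le_iff.mp ?_⟩
  calc ⊤ = dSpan Dop W := hW.symm
    _ ≤ dSpan Dop (Submodule.span k G) := dSpan_mono hWG
    _ ≤ _ := by simpa using dSpan_span_le G

/-- A finitely generated associative conformal algebra `C` with
`dim_k C/DC < ∞` is a finitely generated `k[D]`-module: there is a finite set `G`
such that the elements `Dˢ g` (`g ∈ G`, `s ≥ 0`) span `C` over `k`. -/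
theorem fg_conformal_finite
    {k : Type*} [Field k] [CharZero k]
    {C : Type*} [AddCommGroup C] [Module k C]
    (Dop : C →ₗ[k] C) (mul : ℕ → C →ₗ[k] C →ₗ[k] C)
    (hloc : ∀ x y : C, ∃ N : ℕ, ∀ n ≥ N, mul n x y = 0)
    (hC2 : ∀ (n : ℕ) (x y : C),
      mul n x (Dop y) = Dop (mul n x y) + (n : k) • mul (n - 1) x y)
    (hC3 : ∀ (n : ℕ) (x y : C),
      mul n (Dop x) y = -((n : k)) • mul (n - 1) x y)
    (hassocL : ∀ (n m : ℕ) (u v w : C),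
      mul m (mul n u v) w =
        ∑ s ∈ range (n + 1),
          ((-1 : k) ^ s * (n.choose s : k)) • mul (n - s) u (mul (m + s) v w))
    (hassocR : ∀ (n m : ℕ) (u v w : C),
      mul n u (mul m v w) =
        ∑ s ∈ range (n + 1), ((n.choose s : k)) • mul (m + s) (mul (n - s) u v) w)
    -- `C` is finitely generated as a conformal algebra:
    (B : Finset C)
    (hgen : ∀ S : Submodule k C, (↑B : Set C) ⊆ S →
      (∀ x ∈ S, Dop x ∈ S) →
      (∀ (n : ℕ), ∀ x ∈ S, ∀ y ∈ S, mul n x y ∈ S) → S = ⊤)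
    -- `dim_k C/DC < ∞`:
    (hquot : FiniteDimensional k (C ⧸ LinearMap.range Dop)) :
    ∃ G : Finset C,
      Submodule.span k {y : C | ∃ g ∈ G, ∃ s : ℕ, (Dop ^ s) g = y} = ⊤ :=
  fg_conformal_finite_general Dop mul hloc hC2 hC3 hassocR B hgen hquot
end

section
/- Let $C$ be an associative conformal algebra and $a \in C$ with $a \oo{0} C = C$. Let $R: C \to C$ be the map $x \mapsto \{x \oo{0} a\} = \sum_{s \geq 0} (-1)^s D^{(s)}(x \oo{s} a)$. Then $R$ is injective. More precisely, if $\{x \oo{0} a\} = 0$, then $x \oo{n} b = 0$ for all $b \in C$ and $n \geq 0$; if moreover $C$ acts faithfully on itself from the left (e.g., $C$ is simple with $C \oo{\omega} C = C$), then $x = 0$. -/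
/-!
Sesquilinearity in the left slot gives `(Dˢ z) ⟨m⟩ w = (-1)ˢ m!/(m-s)! · z ⟨m-s⟩ w`, so
`{x ⟨0⟩ a} ⟨m⟩ w = ∑ₛ C(m,s) (x ⟨s⟩ a) ⟨m-s⟩ w`, which is the right-hand side of the
associativity `x ⟨m⟩ (a ⟨0⟩ w) = ∑ₛ C(m,s) (x ⟨m-s⟩ a) ⟨s⟩ w` read backwards. Hence
`{x ⟨0⟩ a} ⟨m⟩ w = x ⟨m⟩ (a ⟨0⟩ w)`, and since `a ⟨0⟩ C = C`, `{x ⟨0⟩ a} = 0` forces every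
product `x ⟨m⟩ b` to vanish.
-/

open Finset

section ConformalAlgebra

variable {k : Type*} {C : Type*} [AddCommGroup C]

theorem mul_pow_left [CommRing k] [Module k C]
    {Dop : C →ₗ[k] C} {mul : ℕ → C →ₗ[k] C →ₗ[k] C}
    (hC3 : ∀ (n : ℕ) (x y : C), mul n (Dop x) y = -((n : k)) • mul (n - 1) x y)
    (s m : ℕ) (z w : C) :
    mul m ((Dop ^ s) z) w = ((-1 : k) ^ s * (m.descFactorial s : k)) • mul (m - s) z w := by
  induction s generalizing m z with
  | zero => simp
  | succ s ih =>
    rw [pow_succ, Module.End.mul_apply, ih, hC3, smul_smul, Nat.sub_sub,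
      Nat.descFactorial_succ]
    congr 1
    push_cast
    ring

theorem mul_mul_zero_right [CommRing k] [Module k C] {mul : ℕ → C →ₗ[k] C →ₗ[k] C}
    (hassocR : ∀ (n m : ℕ) (u v w : C),
      mul n u (mul m v w) =
        ∑ s ∈ range (n + 1), ((n.choose s : k)) • mul (m + s) (mul (n - s) u v) w)
    (m : ℕ) (x a w : C) :
    mul m x (mul 0 a w) = ∑ s ∈ range (m + 1), (m.choose s : k) • mul (m - s) (mul s x a) w := by
  rw [hassocR, ← sum_range_reflect]
  refine sum_congr rfl fun j hj => ?_
  have hj : j ≤ m := Nat.lt_succ_iff.mp (mem_range.mp hj)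
  rw [Nat.add_sub_cancel, zero_add, Nat.sub_sub_self hj, Nat.choose_symm hj]

variable [Field k] [Module k C] (Dop : C →ₗ[k] C) (mul : ℕ → C →ₗ[k] C →ₗ[k] C)

theorem curlyFn_eq_sum_range {n N M : ℕ} {x y : C} (hN : ∀ i ≥ N, mul i x y = 0)
    (hM : N ≤ M) :
    curlyFn Dop mul n x y =
      ∑ s ∈ range M, ((-1 : k) ^ (n + s) * ((s.factorial : k))⁻¹) • (Dop ^ s) (mul (n + s) x y) := by
  refine finsum_eq_finsetSum_of_support_subset _ fun s hs => ?_
  rw [coe_range, Set.mem_Iio]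
  by_contra! hs'
  rw [Function.mem_support, hN _ (by omega), map_zero, smul_zero] at hs
  exact hs rfl

theorem mul_curlyFn_zero_left [CharZero k]
    (hC3 : ∀ (n : ℕ) (x y : C), mul n (Dop x) y = -((n : k)) • mul (n - 1) x y)
    {x a : C} (hloc : ∃ N : ℕ, ∀ n ≥ N, mul n x a = 0) (m : ℕ) (w : C) :
    mul m (curlyFn Dop mul 0 x a) w =
      ∑ s ∈ range (m + 1), (m.choose s : k) • mul (m - s) (mul s x a) w := by
  obtain ⟨N, hN⟩ := hloc
  rw [curlyFn_eq_sum_range Dop mul hN (le_max_left N (m + 1)), map_sum, LinearMap.sum_apply]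
  have hterm : ∀ s, mul m (((-1 : k) ^ (0 + s) * ((s.factorial : k))⁻¹) •
      (Dop ^ s) (mul (0 + s) x a)) w = (m.choose s : k) • mul (m - s) (mul s x a) w := by
    intro s
    have hfac : (s.factorial : k) ≠ 0 := Nat.cast_ne_zero.mpr s.factorial_ne_zero
    rw [map_smul, LinearMap.smul_apply, zero_add, mul_pow_left hC3, smul_smul,
      Nat.descFactorial_eq_factorial_mul_choose]
    congr 1
    push_cast
    field_simp
    rw [← pow_mul, pow_mul', neg_one_sq, one_pow, one_mul]
  simp only [hterm]
  refine (sum_subset (range_subset_range.mpr (le_max_right N (m + 1))) fun s _ hs => ?_).symm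
  rw [Nat.choose_eq_zero_of_lt (by simpa using hs), Nat.cast_zero, zero_smul]

end ConformalAlgebra

theorem R_injective_general
    {k : Type*} [Field k] [CharZero k]
    {C : Type*} [AddCommGroup C] [Module k C]
    (Dop : C →ₗ[k] C) (mul : ℕ → C →ₗ[k] C →ₗ[k] C)
    (hloc : ∀ x y : C, ∃ N : ℕ, ∀ n ≥ N, mul n x y = 0)
    (hC3 : ∀ (n : ℕ) (x y : C),
      mul n (Dop x) y = -((n : k)) • mul (n - 1) x y)
    (hassocR : ∀ (n m : ℕ) (u v w : C),
      mul n u (mul m v w) =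
        ∑ s ∈ range (n + 1), ((n.choose s : k)) • mul (m + s) (mul (n - s) u v) w) :
    ∀ a : C, (∀ y : C, ∃ x : C, mul 0 a x = y) →
      ∀ x : C, curlyFn Dop mul 0 x a = 0 →
        (∀ (n : ℕ) (b : C), mul n x b = 0) ∧
          ((∀ z : C, (∀ (n : ℕ) (b : C), mul n z b = 0) → z = 0) → x = 0) := by
  intro a ha x hx
  have hx_ann : ∀ (n : ℕ) (b : C), mul n x b = 0 := by
    intro n b
    obtain ⟨w, rfl⟩ := ha b
    rw [mul_mul_zero_right hassocR, ← mul_curlyFn_zero_left Dop mul hC3 (hloc x a), hx,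
      map_zero, LinearMap.zero_apply]
  exact ⟨hx_ann, fun hfaithful => hfaithful x hx_ann⟩

theorem R_injective
    {k : Type*} [Field k] [CharZero k]
    {C : Type*} [AddCommGroup C] [Module k C]
    (Dop : C →ₗ[k] C) (mul : ℕ → C →ₗ[k] C →ₗ[k] C)
    (hloc : ∀ x y : C, ∃ N : ℕ, ∀ n ≥ N, mul n x y = 0)
    (hC2 : ∀ (n : ℕ) (x y : C),
      mul n x (Dop y) = Dop (mul n x y) + (n : k) • mul (n - 1) x y)
    (hC3 : ∀ (n : ℕ) (x y : C),
      mul n (Dop x) y = -((n : k)) • mul (n - 1) x y)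
    (hassocL : ∀ (n m : ℕ) (u v w : C),
      mul m (mul n u v) w =
        ∑ s ∈ range (n + 1),
          ((-1 : k) ^ s * (n.choose s : k)) • mul (n - s) u (mul (m + s) v w))
    (hassocR : ∀ (n m : ℕ) (u v w : C),
      mul n u (mul m v w) =
        ∑ s ∈ range (n + 1), ((n.choose s : k)) • mul (m + s) (mul (n - s) u v) w) :
    ∀ a : C, (∀ y : C, ∃ x : C, mul 0 a x = y) →
      ∀ x : C, curlyFn Dop mul 0 x a = 0 →
        (∀ (n : ℕ) (b : C), mul n x b = 0) ∧
          ((∀ z : C, (∀ (n : ℕ) (b : C), mul n z b = 0) → z = 0) → x = 0) :=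
  R_injective_general Dop mul hloc hC3 hassocR
end
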